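/- arXiv:2505.18501 — 3 statements merged into one kernel-verified Lean document; each statement's English description precedes it below -/
import Mathlib

section
/- Let (X, G, *) be a PGM-space with a*a ≥ a for all a ∈ [0,1], and let {y_n} be a sequence of points in X with y_n ≠ y_{n+1} for all n. Suppose there exists k ∈ (0, 1/2] such that G_{y_{n+1}, y_{n+2}, y_{n+3}}(k t) ≥ G_{y_n, y_{n+1}, y_{n+2}}(t) * G_{y_{n+1}, y_{n+2}, y_{n+3}}(t) for all n ≥ 0 and t > 0. Then for all n and all t > 0, G_{y_{n+1}, y_{n+2}, y_{n+3}}(t) ≥ G_{y_0, y_1, y_2}(k^{-(n+1)} t). -/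
open Filter Topology

/-- A Menger probabilistic generalized metric space (PGM-space). -/
structure PGM (X : Type*) where
  star : ℝ → ℝ → ℝ
  G : X → X → X → ℝ → ℝ
  star_mem : ∀ a b, a ∈ Set.Icc (0:ℝ) 1 → b ∈ Set.Icc (0:ℝ) 1 → star a b ∈ Set.Icc (0:ℝ) 1
  star_comm : ∀ a b, star a b = star b a
  star_assoc : ∀ a b c, star a (star b c) = star (star a b) c
  star_mono : ∀ a b c, a ∈ Set.Icc (0:ℝ) 1 → b ∈ Set.Icc (0:ℝ) 1 → c ∈ Set.Icc (0:ℝ) 1 →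
    b ≤ c → star a b ≤ star a c
  star_one : ∀ a, a ∈ Set.Icc (0:ℝ) 1 → star a 1 = a
  star_cont : ContinuousOn (fun p : ℝ × ℝ => star p.1 p.2) (Set.Icc 0 1 ×ˢ Set.Icc 0 1)
  G_mem : ∀ x y z t, G x y z t ∈ Set.Icc (0:ℝ) 1
  G_zero : ∀ x y z t, t ≤ 0 → G x y z t = 0
  G_mono : ∀ x y z, Monotone (G x y z)
  G_left_cont : ∀ x y z t, ContinuousWithinAt (G x y z) (Set.Iio t) t
  G_tendsto_one : ∀ x y z, Tendsto (G x y z) atTop (nhds 1)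
  G_eq_one_iff : ∀ x y z, (∀ t, 0 < t → G x y z t = 1) ↔ (x = y ∧ y = z)
  G_swap : ∀ x y z t, G x y z t = G x z y t
  G_rot : ∀ x y z t, G x y z t = G y x z t
  G_tri : ∀ x y z t, y ≠ z → 0 < t → G x y z t ≤ G x x y t
  G_rect : ∀ x y z a s t, 0 ≤ s → 0 ≤ t →
    star (G x a a t) (G a y z s) ≤ G x y z (t + s)

namespace PGM
variable {X : Type*}

/-- Convergence of a sequence in a PGM-space. -/
def ConvTo (P : PGM X) (x : ℕ → X) (l : X) : Prop :=
  ∀ ε > (0:ℝ), ∀ δ : ℝ, 0 < δ → δ < 1 →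
    ∃ M : ℕ, ∀ n > M, P.G l (x n) (x n) ε > 1 - δ ∧ P.G (x n) l l ε > 1 - δ

/-- Continuity of a self-map of a PGM-space. -/
def Cont (P : PGM X) (f : X → X) : Prop :=
  ∀ z : X, ∀ ε > (0:ℝ), ∀ δ : ℝ, 0 < δ → δ < 1 →
    ∃ ε₁ > (0:ℝ), ∃ δ₁ : ℝ, 0 < δ₁ ∧ δ₁ < 1 ∧
      ∀ x : X, (P.G z x x ε₁ > 1 - δ₁ ∧ P.G x z z ε₁ > 1 - δ₁) →
        (P.G (f z) (f x) (f x) ε > 1 - δ ∧ P.G (f x) (f z) (f z) ε > 1 - δ)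

/-- Compatibility of a triple of self-maps. -/
def Compatible3 (P : PGM X) (A B C : X → X) : Prop :=
  ∀ (x : ℕ → X) (l : X),
    P.ConvTo (fun n => A (x n)) l → P.ConvTo (fun n => B (x n)) l →
    P.ConvTo (fun n => C (x n)) l →
    ∀ u v : ℕ → X,
      u ∈ ({fun n => A (B (x n)), fun n => B (C (x n)), fun n => C (A (x n))} : Set (ℕ → X)) →
      v ∈ ({fun n => A (B (x n)), fun n => B (C (x n)), fun n => C (A (x n))} : Set (ℕ → X)) →
      ∀ t > (0:ℝ), Tendsto (fun n => P.G (u n) (v n) (v n) t) atTop (nhds 1)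

/-- Compatibility of a pair of self-maps. -/
def Compatible2 (P : PGM X) (A S : X → X) : Prop := P.Compatible3 A S S

/-- Cauchy sequences in a PGM-space. -/
def IsCauchy (P : PGM X) (y : ℕ → X) : Prop :=
  ∀ ε > (0:ℝ), ∀ δ : ℝ, 0 < δ → δ < 1 →
    ∃ M : ℕ, ∀ n > M, ∀ m > M, ∀ l > M, P.G (y n) (y m) (y l) ε > 1 - δ

/-- Completeness of a PGM-space. -/
def Complete (P : PGM X) : Prop :=
  ∀ y : ℕ → X, P.IsCauchy y → ∃ l : X, P.ConvTo y l

end PGM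

theorem stmt5 {X : Type*} (P : PGM X)
    (hstar : ∀ a ∈ Set.Icc (0:ℝ) 1, a ≤ P.star a a)
    (y : ℕ → X) (hy : ∀ n, y n ≠ y (n + 1))
    (k : ℝ) (hk0 : 0 < k) (hk : k ≤ 1 / 2)
    (hcontr : ∀ n : ℕ, ∀ t > (0:ℝ),
      P.G (y (n + 1)) (y (n + 2)) (y (n + 3)) (k * t) ≥
        P.star (P.G (y n) (y (n + 1)) (y (n + 2)) t)
          (P.G (y (n + 1)) (y (n + 2)) (y (n + 3)) t)) :
    ∀ n : ℕ, ∀ t > (0:ℝ),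
      P.G (y (n + 1)) (y (n + 2)) (y (n + 3)) t ≥
        P.G (y 0) (y 1) (y 2) ((k ^ (n + 1))⁻¹ * t) := by

  have hk1 : k < 1 := lt_of_le_of_lt hk (by norm_num)
  have hmin : ∀ a b : ℝ, a ∈ Set.Icc (0:ℝ) 1 → b ∈ Set.Icc (0:ℝ) 1 →
      min a b ≤ P.star a b := by
    intro a b ha hb
    have hm : min a b ∈ Set.Icc (0:ℝ) 1 := ⟨le_min ha.1 hb.1, min_le_of_left_le ha.2⟩
    calc min a b ≤ P.star (min a b) (min a b) := hstar _ hm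
    _ ≤ P.star (min a b) b := P.star_mono _ _ _ hm hm hb (min_le_right a b)
    _ = P.star b (min a b) := P.star_comm _ _
    _ ≤ P.star b a := P.star_mono _ _ _ hb hm ha (min_le_left a b)
    _ = P.star a b := P.star_comm _ _
  have lemA : ∀ n : ℕ, ∀ t : ℝ, 0 < t →
      P.G (y n) (y (n+1)) (y (n+2)) t ≤ P.G (y (n+1)) (y (n+2)) (y (n+3)) (k * t) := by
    intro n t ht
    have key : ∀ m : ℕ, min (P.G (y n) (y (n+1)) (y (n+2)) t)
        (P.G (y (n+1)) (y (n+2)) (y (n+3)) (t / k ^ m)) ≤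
        P.G (y (n+1)) (y (n+2)) (y (n+3)) (k * t) := by
      intro m
      induction m with
      | zero =>
        simpa using le_trans (hmin _ _ (P.G_mem _ _ _ _) (P.G_mem _ _ _ _)) (hcontr n t ht)
      | succ m ih =>
        have hpos : 0 < t / k ^ (m+1) := div_pos ht (pow_pos hk0 _)
        have h1 : k * (t / k ^ (m+1)) = t / k ^ m := by
          field_simp
          ring
        have h2 : t ≤ t / k ^ (m+1) := by
          rw [le_div_iff₀ (pow_pos hk0 _)]
          nlinarith [pow_le_one₀ (le_of_lt hk0) (le_of_lt hk1) (n := m+1), ht.le,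
            pow_pos hk0 (m+1)]
        have step : min (P.G (y n) (y (n+1)) (y (n+2)) (t / k ^ (m+1)))
            (P.G (y (n+1)) (y (n+2)) (y (n+3)) (t / k ^ (m+1))) ≤
            P.G (y (n+1)) (y (n+2)) (y (n+3)) (t / k ^ m) := by
          rw [← h1]
          exact le_trans (hmin _ _ (P.G_mem _ _ _ _) (P.G_mem _ _ _ _)) (hcontr n _ hpos)
        refine le_trans ?_ ih
        refine le_min (min_le_left _ _) (le_trans ?_ step)
        exact le_min (le_trans (min_le_left _ _) (P.G_mono _ _ _ h2)) (min_le_right _ _)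
    have htend : Tendsto (fun m : ℕ => t / k ^ m) atTop atTop := by
      have h : Tendsto (fun m : ℕ => (k⁻¹) ^ m) atTop atTop :=
        tendsto_pow_atTop_atTop_of_one_lt ((one_lt_inv₀ hk0).mpr hk1)
      have := h.const_mul_atTop ht
      simpa [div_eq_mul_inv, inv_pow, mul_comm] using this
    have hG : Tendsto (fun m : ℕ => P.G (y (n+1)) (y (n+2)) (y (n+3)) (t / k ^ m))
        atTop (nhds 1) := (P.G_tendsto_one _ _ _).comp htend
    have hmintend : Tendsto (fun m : ℕ => min (P.G (y n) (y (n+1)) (y (n+2)) t)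
        (P.G (y (n+1)) (y (n+2)) (y (n+3)) (t / k ^ m))) atTop
        (nhds (P.G (y n) (y (n+1)) (y (n+2)) t)) := by
      have := Tendsto.min (tendsto_const_nhds (x := P.G (y n) (y (n+1)) (y (n+2)) t)) hG
      simpa [min_eq_left (P.G_mem (y n) (y (n+1)) (y (n+2)) t).2] using this
    exact le_of_tendsto hmintend (Filter.Eventually.of_forall key)
  intro n
  induction n with
  | zero =>
    intro t ht
    have hinv : 0 < (k:ℝ)⁻¹ * t := mul_pos (inv_pos.mpr hk0) ht
    have := lemA 0 (k⁻¹ * t) hinv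
    have hkt : k * (k⁻¹ * t) = t := by field_simp
    simpa [hkt] using this
  | succ n ih =>
    intro t ht
    have hinv : 0 < k⁻¹ * t := mul_pos (inv_pos.mpr hk0) ht
    have h1 := lemA (n+1) (k⁻¹ * t) hinv
    have hkt : k * (k⁻¹ * t) = t := by field_simp
    rw [hkt] at h1
    have h2 := ih (k⁻¹ * t) hinv
    have heq : (k ^ (n+1))⁻¹ * (k⁻¹ * t) = (k ^ (n+1+1))⁻¹ * t := by
      rw [pow_succ, mul_inv]
      ring
    rw [heq] at h2
    exact le_trans h2 h1
end

section
/- Let (X, G, *) be a PGM-space with a*a ≥ a for all a ∈ [0,1], and let {y_n} be a sequence in X with y_n ≠ y_{n+1} for all n, satisfying G_{y_{n+1}, y_{n+2}, y_{n+3}}(t) ≥ G_{y_0, y_1, y_2}(k^{-(n+1)} t) for some k ∈ (0, 1/2], all n ≥ 0, and all t > 0. Then {y_n} is a Cauchy sequence, i.e., for any ε>0 and 0<δ<1 there exists M such that G_{y_n, y_m, y_l}(ε) > 1−δ for all n, m, l > M. -/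
open Filter Topology

theorem stmt6 {X : Type*} (P : PGM X)
    (hstar : ∀ a ∈ Set.Icc (0:ℝ) 1, a ≤ P.star a a)
    (y : ℕ → X) (hy : ∀ n, y n ≠ y (n + 1))
    (k : ℝ) (hk0 : 0 < k) (hk : k ≤ 1 / 2)
    (hbound : ∀ n : ℕ, ∀ t > (0:ℝ),
      P.G (y (n + 1)) (y (n + 2)) (y (n + 3)) t ≥
        P.G (y 0) (y 1) (y 2) ((k ^ (n + 1))⁻¹ * t)) :
    P.IsCauchy y := by
  intro ε hε δ hδ0 hδ1
  set F : ℝ → ℝ := P.G (y 0) (y 1) (y 2) with hF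
  have hFmono : Monotone F := P.G_mono _ _ _
  have hFle : ∀ t, F t ≤ 1 := fun t => (P.G_mem _ _ _ t).2
  -- star dominates min
  have hsmin : ∀ a b : ℝ, a ∈ Set.Icc (0:ℝ) 1 → b ∈ Set.Icc (0:ℝ) 1 →
      min a b ≤ P.star a b := by
    intro a b ha hb
    have hm : min a b ∈ Set.Icc (0:ℝ) 1 :=
      ⟨le_min ha.1 hb.1, min_le_of_left_le ha.2⟩
    calc min a b ≤ P.star (min a b) (min a b) := hstar _ hm
      _ ≤ P.star (min a b) b := P.star_mono _ _ _ hm hm hb (min_le_right _ _)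
      _ = P.star b (min a b) := P.star_comm _ _
      _ ≤ P.star b a := P.star_mono _ _ _ hb hm ha (min_le_left _ _)
      _ = P.star a b := P.star_comm _ _
  -- rectangle inequality with min
  have hrectmin : ∀ (x a y' z : X) (t : ℝ), 0 < t →
      min (P.G x a a (t/2)) (P.G a y' z (t/2)) ≤ P.G x y' z t := by
    intro x a y' z t ht
    have h1 := P.G_rect x y' z a (t/2) (t/2) (by linarith) (by linarith)
    have h2 := hsmin _ _ (P.G_mem x a a (t/2)) (P.G_mem a y' z (t/2))
    have h3 : t/2 + t/2 = t := by ring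
    rw [h3] at h1
    exact le_trans h2 h1
  -- move lemma: G u u v = G v u u
  have hmove : ∀ (u v : X) (t : ℝ), P.G u u v t = P.G v u u t := by
    intro u v t
    rw [P.G_swap, P.G_rot]
  -- reversal: G a b c = G c b a
  have hrev : ∀ (a b c : X) (t : ℝ), P.G a b c t = P.G c b a t := by
    intro a b c t
    rw [P.G_swap, P.G_rot, P.G_swap]
  -- power bound : 2^j * t ≤ (k^j)⁻¹ * t for t > 0
  have hkpow : ∀ (j : ℕ) (t : ℝ), 0 < t → (2:ℝ)^j * t ≤ (k ^ j)⁻¹ * t := by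
    intro j t ht
    have h1 : (0:ℝ) < k ^ j := pow_pos hk0 j
    have h2 : k ^ j ≤ (1/2:ℝ) ^ j := pow_le_pow_left₀ hk0.le hk j
    have h3 : ((1/2:ℝ)^j)⁻¹ ≤ (k^j)⁻¹ := by
      apply inv_anti₀ h1 h2
    have h4 : ((1/2:ℝ)^j)⁻¹ = 2^j := by
      rw [one_div, inv_pow, inv_inv]
    nlinarith [h3, h4]
  -- triple bound
  have htrip : ∀ j : ℕ, 1 ≤ j → ∀ t : ℝ, 0 < t →
      F ((2:ℝ)^j * t) ≤ P.G (y j) (y (j+1)) (y (j+2)) t := by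
    intro j hj t ht
    obtain ⟨n, rfl⟩ : ∃ n, j = n + 1 := ⟨j - 1, by omega⟩
    have h1 := hbound n t ht
    have h2 := hFmono (hkpow (n+1) t ht)
    exact le_trans h2 h1
  -- pair bound: repeated smaller
  have hL1 : ∀ j : ℕ, 1 ≤ j → ∀ t : ℝ, 0 < t →
      F ((2:ℝ)^j * t) ≤ P.G (y (j+1)) (y j) (y j) t := by
    intro j hj t ht
    have h1 := htrip j hj t ht
    have h2 := P.G_tri (y j) (y (j+1)) (y (j+2)) t (hy (j+1)) ht
    rw [hmove (y j) (y (j+1)) t] at h2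
    exact le_trans h1 h2
  -- pair bound: repeated larger
  have hL2 : ∀ j : ℕ, 1 ≤ j → ∀ t : ℝ, 0 < t →
      F ((2:ℝ)^j * t) ≤ P.G (y (j+1)) (y (j+2)) (y (j+2)) t := by
    intro j hj t ht
    have h1 := htrip j hj t ht
    rw [hrev] at h1
    have h2 := P.G_tri (y (j+2)) (y (j+1)) (y j) t (hy j).symm ht
    rw [hmove (y (j+2)) (y (j+1)) t] at h2
    exact le_trans h1 h2
  -- descending chains
  have hdown : ∀ (d b : ℕ), 1 ≤ b → ∀ t : ℝ, 0 < t →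
      F ((2:ℝ)^b * t) ≤ P.G (y (b+1+d)) (y b) (y b) (2*t) := by
    intro d
    induction d with
    | zero =>
      intro b hb t ht
      have h1 := hL1 b hb (2*t) (by linarith)
      exact le_trans (hFmono (by nlinarith [pow_pos (zero_lt_two (α := ℝ)) b])) h1
    | succ d ih =>
      intro b hb t ht
      have hA : b + 1 + (d+1) = (b+1) + 1 + d := by omega
      rw [hA]
      have h1 : F ((2:ℝ)^b * t) ≤ P.G (y ((b+1)+1+d)) (y (b+1)) (y (b+1)) t := by
        have := ih (b+1) (by omega) (t/2) (by linarith)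
        have he : 2 * (t/2) = t := by ring
        rw [he] at this
        refine le_trans (hFmono ?_) this
        have : (2:ℝ)^(b+1) * (t/2) = 2^b * t := by rw [pow_succ]; ring
        rw [this]
      have h2 : F ((2:ℝ)^b * t) ≤ P.G (y (b+1)) (y b) (y b) t := hL1 b hb t ht
      have h3 := hrectmin (y ((b+1)+1+d)) (y (b+1)) (y b) (y b) (2*t) (by linarith)
      have he2 : 2*t/2 = t := by ring
      rw [he2] at h3
      exact le_trans (le_min h1 h2) h3
  -- ascending chains
  have hup : ∀ (d a : ℕ), 1 ≤ a → ∀ t : ℝ, 0 < t →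
      F ((2:ℝ)^a * t) ≤ P.G (y (a+1)) (y (a+2+d)) (y (a+2+d)) (2*t) := by
    intro d
    induction d with
    | zero =>
      intro a ha t ht
      have h1 := hL2 a ha (2*t) (by linarith)
      exact le_trans (hFmono (by nlinarith [pow_pos (zero_lt_two (α := ℝ)) a])) h1
    | succ d ih =>
      intro a ha t ht
      have hA : a + 2 + (d+1) = (a+1) + 2 + d := by omega
      rw [hA]
      have h1 : F ((2:ℝ)^a * t) ≤ P.G (y (a+1)) (y (a+2)) (y (a+2)) t := hL2 a ha t ht
      have h2 : F ((2:ℝ)^a * t) ≤ P.G (y (a+2)) (y ((a+1)+2+d)) (y ((a+1)+2+d)) t := by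
        have := ih (a+1) (by omega) (t/2) (by linarith)
        have he : 2 * (t/2) = t := by ring
        rw [he] at this
        refine le_trans (hFmono ?_) this
        have : (2:ℝ)^(a+1) * (t/2) = 2^a * t := by rw [pow_succ]; ring
        rw [this]
      have h3 := hrectmin (y (a+1)) (y (a+2)) (y ((a+1)+2+d)) (y ((a+1)+2+d)) (2*t)
        (by linarith)
      have he2 : 2*t/2 = t := by ring
      rw [he2] at h3
      exact le_trans (le_min h1 h2) h3
  -- general pair bound
  have hpair : ∀ (a b : ℕ), 2 ≤ a → 2 ≤ b → ∀ t : ℝ, 0 < t →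
      F ((2:ℝ)^(min a b) * t) ≤ P.G (y a) (y b) (y b) (4*t) := by
    intro a b ha hb t ht
    rcases lt_trichotomy a b with h | h | h
    · obtain ⟨a', rfl⟩ : ∃ a', a = a' + 1 := ⟨a - 1, by omega⟩
      obtain ⟨d, rfl⟩ : ∃ d, b = a' + 2 + d := ⟨b - a' - 2, by omega⟩
      have h1 := hup d a' (by omega) (2*t) (by linarith)
      have he : 2 * (2*t) = 4*t := by ring
      rw [he] at h1
      refine le_trans (hFmono ?_) h1
      have hm : min (a'+1) (a'+2+d) = a' + 1 := min_eq_left (by omega)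
      rw [hm, pow_succ]
      nlinarith [pow_pos (zero_lt_two (α := ℝ)) a']
    · subst h
      have h1 : P.G (y a) (y a) (y a) (4*t) = 1 :=
        (P.G_eq_one_iff (y a) (y a) (y a)).mpr ⟨rfl, rfl⟩ (4*t) (by linarith)
      rw [h1]
      exact hFle _
    · obtain ⟨d, rfl⟩ : ∃ d, a = b + 1 + d := ⟨a - b - 1, by omega⟩
      have h1 := hdown d b (by omega) (2*t) (by linarith)
      have he : 2 * (2*t) = 4*t := by ring
      rw [he] at h1
      refine le_trans (hFmono ?_) h1
      have hm : min (b+1+d) b = b := min_eq_right (by omega)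
      rw [hm]
      nlinarith [pow_pos (zero_lt_two (α := ℝ)) b]
  -- choose threshold
  have htend := P.G_tendsto_one (y 0) (y 1) (y 2)
  have hev : ∀ᶠ s in atTop, 1 - δ < F s :=
    htend.eventually (eventually_gt_nhds (by linarith))
  obtain ⟨T, hT⟩ := eventually_atTop.mp hev
  obtain ⟨N, hN⟩ := pow_unbounded_of_one_lt (T / (ε/8)) (one_lt_two (α := ℝ))
  have hNb : T ≤ (2:ℝ)^N * (ε/8) := by
    have h8 : (0:ℝ) < ε/8 := by linarith
    rw [div_lt_iff₀ h8] at hN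
    linarith
  refine ⟨N + 2, ?_⟩
  intro n hn m hm l hl
  have key : ∀ a b : ℕ, N + 2 < a → N + 2 < b →
      1 - δ < P.G (y a) (y b) (y b) (ε/2) := by
    intro a b ha hb
    have h1 := hpair a b (by omega) (by omega) (ε/8) (by linarith)
    have he : 4 * (ε/8) = ε/2 := by ring
    rw [he] at h1
    refine lt_of_lt_of_le ?_ h1
    apply hT
    refine le_trans hNb ?_
    have : (2:ℝ)^N ≤ 2^(min a b) :=
      pow_le_pow_right₀ (by norm_num) (by omega)
    nlinarith
  have h1 := key n m hn hm
  have h2 := key l m hl hm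
  have h3 := hrectmin (y n) (y m) (y m) (y l) ε hε
  rw [hmove (y m) (y l) (ε/2)] at h3
  calc 1 - δ < min (P.G (y n) (y m) (y m) (ε/2)) (P.G (y l) (y m) (y m) (ε/2)) :=
        lt_min h1 h2
    _ ≤ P.G (y n) (y m) (y l) ε := h3
end

section
/- Let (X, G, *) be a complete PGM-space with a*a ≥ a for all a ∈ [0,1]. Let A, B, C, D, S, T : X → X be self-maps satisfying: (a) there exists a sequence {x_n} of distinct points of X with T x_{3n+1} = A x_{3n}, D x_{3n+2} = B x_{3n+1}, S x_{3n+3} = C x_{3n+2}, and A x_{3n} ≠ B x_{3n+1}, B x_{3n+1} ≠ C x_{3n+2}, C x_{3n+2} ≠ A x_{3n+3} for all n ≥ 0; (b) the pairs [A,S], [B,T], [C,D] are compatible; (c) D, S, T are continuous; (d) there exists k ∈ (0, 1/2] with G_{Ax, By, Cz}(kt) ≥ G_{Sx, Ty, Dz}(t) * G_{Sx, Ax, Dz}(t) * G_{Ax, By, Cz}(t) * G_{Ty, By, Cz}(t) * G_{Sx, Cz, Dz}(2t) for all x, y, z ∈ X and t > 0. Then A, B, C, D, S, T have a unique common fixed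 point. -/
open Filter Topology

section Helpers
variable {X : Type*} (P : PGM X)

lemma pgm_le1 (x y z : X) (t : ℝ) : P.G x y z t ≤ 1 := (P.G_mem x y z t).2
lemma pgm_ge0 (x y z : X) (t : ℝ) : 0 ≤ P.G x y z t := (P.G_mem x y z t).1

lemma pgm_cyc (a b c : X) (t : ℝ) : P.G a b c t = P.G c a b t := by
  rw [P.G_swap, P.G_rot]

lemma pgm_one {x : X} {t : ℝ} (ht : 0 < t) : P.G x x x t = 1 :=
  ((P.G_eq_one_iff x x x).mpr ⟨rfl, rfl⟩) t ht


lemma pgm_rev (a b c : X) (s : ℝ) : P.G a b c s = P.G c b a s := by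
  rw [pgm_cyc P a b c s, P.G_swap]

lemma pgm_min_le_star (hstar : ∀ a ∈ Set.Icc (0:ℝ) 1, a ≤ P.star a a) {a b : ℝ} (ha : a ∈ Set.Icc (0:ℝ) 1) (hb : b ∈ Set.Icc (0:ℝ) 1) :
    min a b ≤ P.star a b := by
  rcases le_total a b with h | h
  · calc min a b ≤ a := min_le_left _ _
    _ ≤ P.star a a := hstar a ha
    _ ≤ P.star a b := P.star_mono a a b ha ha hb h
  · calc min a b ≤ b := min_le_right _ _
    _ ≤ P.star b b := hstar b hb
    _ ≤ P.star b a := P.star_mono b b a hb hb ha h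
    _ = P.star a b := P.star_comm b a

lemma pgm_rect_min (hstar : ∀ a ∈ Set.Icc (0:ℝ) 1, a ≤ P.star a a) (x y z a : X) {s t : ℝ} (hs : 0 ≤ s) (ht : 0 ≤ t) :
    min (P.G x a a t) (P.G a y z s) ≤ P.G x y z (t + s) :=
  le_trans (pgm_min_le_star P hstar (P.G_mem _ _ _ _) (P.G_mem _ _ _ _))
    (P.G_rect x y z a s t hs ht)

lemma pgm_min5_le_star (hstar : ∀ a ∈ Set.Icc (0:ℝ) 1, a ≤ P.star a a) (a1 a2 a3 a4 a5 : ℝ)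
    (h1 : a1 ∈ Set.Icc (0:ℝ) 1) (h2 : a2 ∈ Set.Icc (0:ℝ) 1) (h3 : a3 ∈ Set.Icc (0:ℝ) 1)
    (h4 : a4 ∈ Set.Icc (0:ℝ) 1) (h5 : a5 ∈ Set.Icc (0:ℝ) 1) :
    min a1 (min a2 (min a3 (min a4 a5))) ≤
      P.star a1 (P.star a2 (P.star a3 (P.star a4 a5))) := by
  have s45 := P.star_mem a4 a5 h4 h5
  have m45 : min a4 a5 ≤ P.star a4 a5 := pgm_min_le_star P hstar h4 h5
  have s345 := P.star_mem a3 _ h3 s45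
  have m345 : min a3 (min a4 a5) ≤ P.star a3 (P.star a4 a5) :=
    le_trans (min_le_min_left a3 m45) (pgm_min_le_star P hstar h3 s45)
  have s2345 := P.star_mem a2 _ h2 s345
  have m2345 : min a2 (min a3 (min a4 a5)) ≤ P.star a2 (P.star a3 (P.star a4 a5)) :=
    le_trans (min_le_min_left a2 m345) (pgm_min_le_star P hstar h2 s345)
  exact le_trans (min_le_min_left a1 m2345) (pgm_min_le_star P hstar h1 s2345)

lemma pgm_ev_gt {f : ℕ → ℝ} (h : Filter.Tendsto f Filter.atTop (nhds 1)) {δ : ℝ} (hδ : 0 < δ) :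
    ∃ N, ∀ n ≥ N, 1 - δ < f n := by
  have : ∀ᶠ n in Filter.atTop, 1 - δ < f n :=
    h.eventually (eventually_gt_nhds (by linarith))
  exact Filter.eventually_atTop.mp this

lemma pgm_conv_const (a : X) : P.ConvTo (fun _ => a) a := by
  intro ε hε δ hδ0 hδ1
  exact ⟨0, fun n _ => by
    constructor <;> · rw [pgm_one P hε]; linarith⟩

lemma pgm_conv_sub {y : ℕ → X} {u : X} (hy : P.ConvTo y u) (φ : ℕ → ℕ) (hφ : ∀ n, n ≤ φ n) :
    P.ConvTo (fun n => y (φ n)) u := by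
  intro ε hε δ hδ0 hδ1
  obtain ⟨M, hM⟩ := hy ε hε δ hδ0 hδ1
  exact ⟨M, fun n hn => hM (φ n) (lt_of_lt_of_le hn (hφ n))⟩

lemma pgm_cont_apply {f : X → X} (hf : P.Cont f) {p : ℕ → X} {a : X} (hp : P.ConvTo p a) :
    P.ConvTo (fun n => f (p n)) (f a) := by
  intro ε hε δ hδ0 hδ1
  obtain ⟨ε₁, hε₁, δ₁, hδ₁0, hδ₁1, hff⟩ := hf a ε hε δ hδ0 hδ1
  obtain ⟨M, hM⟩ := hp ε₁ hε₁ δ₁ hδ₁0 hδ₁1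
  exact ⟨M, fun n hn => hff (p n) (hM n hn)⟩

lemma pgm_conv_of_close (hstar : ∀ a ∈ Set.Icc (0:ℝ) 1, a ≤ P.star a a) {p q : ℕ → X} {l : X}
    (h1 : ∀ t > (0:ℝ), Filter.Tendsto (fun n => P.G (p n) (q n) (q n) t) Filter.atTop (nhds 1))
    (h2 : ∀ t > (0:ℝ), Filter.Tendsto (fun n => P.G (q n) (p n) (p n) t) Filter.atTop (nhds 1))
    (hq : P.ConvTo q l) : P.ConvTo p l := by
  intro ε hε δ hδ0 hδ1
  obtain ⟨M1, hM1⟩ := hq (ε/2) (by linarith) δ hδ0 hδ1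
  obtain ⟨M2, hM2⟩ := pgm_ev_gt (h2 (ε/2) (by linarith)) hδ0
  obtain ⟨M3, hM3⟩ := pgm_ev_gt (h1 (ε/2) (by linarith)) hδ0
  refine ⟨M1 + M2 + M3, fun n hn => ?_⟩
  have c1 := hM1 n (by omega)
  have c2 := hM2 n (by omega)
  have c3 := hM3 n (by omega)
  have hh : (ε/2 : ℝ) + ε/2 = ε := by ring
  constructor
  · have := pgm_rect_min P hstar l (p n) (p n) (q n)
      (by linarith : (0:ℝ) ≤ ε/2) (by linarith : (0:ℝ) ≤ ε/2)
    rw [hh] at this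
    have hmin : 1 - δ < min (P.G l (q n) (q n) (ε/2)) (P.G (q n) (p n) (p n) (ε/2)) :=
      lt_min c1.1 c2
    linarith [le_trans (le_of_lt hmin) this]
  · have := pgm_rect_min P hstar (p n) l l (q n)
      (by linarith : (0:ℝ) ≤ ε/2) (by linarith : (0:ℝ) ≤ ε/2)
    rw [hh] at this
    have hmin : 1 - δ < min (P.G (p n) (q n) (q n) (ε/2)) (P.G (q n) l l (ε/2)) :=
      lt_min c3 c1.2
    linarith [le_trans (le_of_lt hmin) this]

end Helpers

section Helpers2
variable {X : Type*} (P : PGM X)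

lemma pgm_sub_eps {A B : ℝ} (h : ∀ ε : ℝ, 0 < ε → ε < 1 → A - ε ≤ B) : A ≤ B := by
  by_contra hc
  push_neg at hc
  have := h (min ((A-B)/2) (1/2)) (lt_min (by linarith) one_half_pos)
    (lt_of_le_of_lt (min_le_right _ _) (by norm_num))
  have h2 : min ((A-B)/2) (1/2) ≤ (A-B)/2 := min_le_left _ _
  linarith

lemma pgm_glim' (hstar : ∀ a ∈ Set.Icc (0:ℝ) 1, a ≤ P.star a a) {p q r : ℕ → X} {a b c : X}
    (hp : P.ConvTo p a) (hq : P.ConvTo q b) (hr : P.ConvTo r c)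
    {t s' : ℝ} (h0 : 0 < s') (hst : s' < t) {ε : ℝ} (hε : 0 < ε) :
    ∃ N, ∀ n ≥ N, P.G a b c s' - ε ≤ P.G (p n) (q n) (r n) t := by
  set η := (t - s') / 3 with hηdef
  have hη : 0 < η := by rw [hηdef]; linarith
  set δ := min ε (1/2) with hδdef
  have hδ0 : 0 < δ := lt_min hε (by norm_num)
  have hδ1 : δ < 1 := lt_of_le_of_lt (min_le_right _ _) (by norm_num)
  have hδε : δ ≤ ε := min_le_left _ _
  obtain ⟨M1, h1⟩ := hp η hη δ hδ0 hδ1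
  obtain ⟨M2, h2⟩ := hq η hη δ hδ0 hδ1
  obtain ⟨M3, h3⟩ := hr η hη δ hδ0 hδ1
  refine ⟨M1+M2+M3+1, fun n hn => ?_⟩
  have c1 := (h1 n (by omega)).2
  have c2 := (h2 n (by omega)).2
  have c3 := (h3 n (by omega)).2
  have hGle := pgm_le1 P a b c s'
  have B3 : P.G a b c s' - ε ≤ P.G a b (r n) (η + s') := by
    have hrect := pgm_rect_min P hstar (r n) a b c (le_of_lt h0) (le_of_lt hη)
    have hperm : P.G c a b s' = P.G a b c s' := (pgm_cyc P a b c s').symm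
    have hperm2 : P.G (r n) a b (η + s') = P.G a b (r n) (η + s') := (pgm_cyc P a b (r n) _).symm
    rw [hperm, hperm2] at hrect
    refine le_trans (le_min ?_ ?_) hrect
    · linarith
    · linarith
  have B2 : P.G a b c s' - ε ≤ P.G a (q n) (r n) (s' + 2*η) := by
    have hrect := pgm_rect_min P hstar (q n) a (r n) b
      (show (0:ℝ) ≤ η + s' by linarith) (le_of_lt hη)
    have hperm : P.G b a (r n) (η + s') = P.G a b (r n) (η + s') := (P.G_rot a b (r n) _).symm
    have hperm2 : P.G (q n) a (r n) (η + (η + s')) = P.G a (q n) (r n) (η + (η + s')) :=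
      (P.G_rot a (q n) (r n) _).symm
    rw [hperm, hperm2] at hrect
    have htime : η + (η + s') = s' + 2*η := by ring
    rw [htime] at hrect
    refine le_trans (le_min ?_ B3) hrect
    linarith
  have hrect := pgm_rect_min P hstar (p n) (q n) (r n) a
    (show (0:ℝ) ≤ s' + 2*η by linarith) (le_of_lt hη)
  have htime : η + (s' + 2*η) = t := by rw [hηdef]; ring
  rw [htime] at hrect
  refine le_trans (le_min ?_ B2) hrect
  linarith

lemma pgm_glim (hstar : ∀ a ∈ Set.Icc (0:ℝ) 1, a ≤ P.star a a) {p q r : ℕ → X} {a b c : X}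
    (hp : P.ConvTo p a) (hq : P.ConvTo q b) (hr : P.ConvTo r c)
    {t s L : ℝ} (ht : 0 < t) (hts : t < s) (hL1 : L ≤ 1)
    (h : ∀ ε : ℝ, 0 < ε → ∃ N, ∀ n ≥ N, L - ε ≤ P.G (p n) (q n) (r n) t) :
    L ≤ P.G a b c s := by
  apply pgm_sub_eps
  intro ε hε hε1
  set η := (s - t) / 3 with hηdef
  have hη : 0 < η := by rw [hηdef]; linarith
  obtain ⟨N0, hN0⟩ := h (ε/2) (by linarith)
  obtain ⟨M1, h1⟩ := hp η hη (ε/2) (by linarith) (by linarith)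
  obtain ⟨M2, h2⟩ := hq η hη (ε/2) (by linarith) (by linarith)
  obtain ⟨M3, h3⟩ := hr η hη (ε/2) (by linarith) (by linarith)
  set n := N0 + M1 + M2 + M3 + 1 with hndef
  have c1 := (h1 n (by omega)).1
  have c2 := (h2 n (by omega)).1
  have c3 := (h3 n (by omega)).1
  have c0 := hN0 n (by omega)
  have B3 : L - ε ≤ P.G c (p n) (q n) (η + t) := by
    have hrect := pgm_rect_min P hstar c (p n) (q n) (r n) (le_of_lt ht) (le_of_lt hη)
    have hperm : P.G (r n) (p n) (q n) t = P.G (p n) (q n) (r n) t := (pgm_cyc P (p n) (q n) (r n) t).symm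
    rw [hperm] at hrect
    refine le_trans (le_min ?_ ?_) hrect
    · linarith
    · linarith
  have B2 : L - ε ≤ P.G (p n) b c (2*η + t) := by
    have hrect := pgm_rect_min P hstar b (p n) c (q n)
      (show (0:ℝ) ≤ η + t by linarith) (le_of_lt hη)
    have hperm : P.G (q n) (p n) c (η + t) = P.G (p n) (q n) c (η + t) :=
      (P.G_rot (p n) (q n) c _).symm
    have hperm3 : P.G (p n) (q n) c (η + t) = P.G c (p n) (q n) (η + t) :=
      pgm_cyc P (p n) (q n) c _
    rw [hperm, hperm3] at hrect
    have hperm4 : P.G b (p n) c (η + (η + t)) = P.G (p n) b c (η + (η + t)) :=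
      (P.G_rot (p n) b c _).symm
    rw [hperm4] at hrect
    have htime : η + (η + t) = 2*η + t := by ring
    rw [htime] at hrect
    have B3' : L - ε ≤ P.G c (p n) (q n) (η + t) := B3
    refine le_trans (le_min ?_ B3') hrect
    linarith
  have hrect := pgm_rect_min P hstar a b c (p n)
    (show (0:ℝ) ≤ 2*η + t by linarith) (le_of_lt hη)
  have htime : η + (2*η + t) = s := by rw [hηdef]; ring
  rw [htime] at hrect
  refine le_trans (le_min ?_ B2) hrect
  linarith

lemma pgm_hpp (hstar : ∀ a ∈ Set.Icc (0:ℝ) 1, a ≤ P.star a a) {y : ℕ → X} {u : X}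
    (conv : P.ConvTo y u) (hyne : ∀ n, y n ≠ y (n+1))
    (p : X) {r r' : ℝ} (h0 : 0 < r') (hrr : r' < r) : P.G p u u r' ≤ P.G p p u r := by
  apply pgm_sub_eps
  intro ε hε hε1
  obtain ⟨M, hM⟩ := conv (r - r') (by linarith) ε hε hε1
  obtain ⟨m, hmM, hmne⟩ : ∃ m, m > M ∧ y m ≠ u := by
    by_cases hca : y (M+1) = u
    · exact ⟨M+2, by omega, fun hc => hyne (M+1) (by rw [hca, hc])⟩
    · exact ⟨M+1, by omega, hca⟩
  have hc := (hM m hmM).2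
  have htri : P.G p u (y m) r ≤ P.G p p u r :=
    P.G_tri p u (y m) r (Ne.symm hmne) (by linarith)
  have hrect := pgm_rect_min P hstar (y m) p u u (le_of_lt h0)
    (show (0:ℝ) ≤ r - r' by linarith)
  have hperm2 : P.G u p u r' = P.G p u u r' := P.G_rot p u u r' ▸ rfl
  have hperm : P.G (y m) p u (r - r' + r') = P.G p u (y m) (r - r' + r') :=
    (pgm_cyc P p u (y m) _).symm
  rw [hperm2, hperm] at hrect
  have htime : r - r' + r' = r := by ring
  rw [htime] at hrect
  refine le_trans (le_trans (le_min ?_ (by linarith)) hrect) htri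
  linarith [pgm_le1 P p u u r']

lemma pgm_fixed {a u : X} (hkey : ∀ s : ℝ, 0 < s → P.G a u u ((3/2) * s) ≤ P.G a u u s) :
    a = u := by
  have hiter : ∀ m : ℕ, ∀ s : ℝ, 0 < s → P.G a u u ((3/2)^m * s) ≤ P.G a u u s := by
    intro m
    induction m with
    | zero => intro s hs; simp
    | succ m ih =>
      intro s hs
      have h1 := ih ((3/2) * s) (by linarith)
      have h2 := hkey s hs
      have e : ((3:ℝ)/2)^(m+1) * s = (3/2)^m * ((3/2) * s) := by ring
      rw [e]
      exact le_trans h1 h2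
  have hone : ∀ s : ℝ, 0 < s → P.G a u u s = 1 := by
    intro s hs
    have htend : Filter.Tendsto (fun m : ℕ => ((3:ℝ)/2)^m * s) Filter.atTop Filter.atTop :=
      Filter.Tendsto.atTop_mul_const hs (tendsto_pow_atTop_atTop_of_one_lt (by norm_num))
    have h2 : Filter.Tendsto (fun m : ℕ => P.G a u u ((3/2)^m * s)) Filter.atTop (nhds 1) :=
      (P.G_tendsto_one a u u).comp htend
    have h3 : (1:ℝ) ≤ P.G a u u s :=
      le_of_tendsto h2 (Filter.Eventually.of_forall (fun m => hiter m s hs))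
    exact le_antisymm (pgm_le1 P a u u s) h3
  exact ((P.G_eq_one_iff a u u).mp hone).1

lemma pgm_master (hstar : ∀ a ∈ Set.Icc (0:ℝ) 1, a ≤ P.star a a) {k : ℝ}
    (hk0 : 0 < k) (hk2 : k ≤ 1/2) {u : X} (a : X)
    {p q r : ℕ → X} (hp : P.ConvTo p a) (hq : P.ConvTo q u) (hr : P.ConvTo r u)
    (hmain : ∀ t : ℝ, 0 < t → ∀ s' : ℝ, 0 < s' → s' < t → ∀ ε : ℝ, 0 < ε →
      ∃ N, ∀ n ≥ N, P.G a u u s' - ε ≤ P.G (p n) (q n) (r n) (k * t)) : a = u := by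
  apply pgm_fixed P
  intro s hs
  have ht8 : (0:ℝ) < (8/5) * s := by linarith
  have hkt : 0 < k * ((8/5)*s) := mul_pos hk0 ht8
  have hkts : k * ((8/5)*s) < s := by nlinarith
  refine pgm_glim P hstar hp hq hr hkt hkts (pgm_le1 P a u u _) ?_
  intro ε hε
  exact hmain ((8/5)*s) ht8 ((3/2)*s) (by linarith) (by linarith) ε hε

lemma pgm_step (hstar : ∀ a ∈ Set.Icc (0:ℝ) 1, a ≤ P.star a a) {k : ℝ}
    (hk0 : 0 < k) (hk2 : k ≤ 1/2) {u : X} (a : X)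
    {p q r : ℕ → X} (hp : P.ConvTo p a) (hq : P.ConvTo q u) (hr : P.ConvTo r u)
    {p1 q1 r1 p2 q2 r2 p3 q3 r3 p4 q4 r4 p5 q5 r5 : ℕ → X}
    {a1 b1 c1 a2 b2 c2 a3 b3 c3 a4 b4 c4 a5 b5 c5 : X}
    (h1a : P.ConvTo p1 a1) (h1b : P.ConvTo q1 b1) (h1c : P.ConvTo r1 c1)
    (h2a : P.ConvTo p2 a2) (h2b : P.ConvTo q2 b2) (h2c : P.ConvTo r2 c2)
    (h3a : P.ConvTo p3 a3) (h3b : P.ConvTo q3 b3) (h3c : P.ConvTo r3 c3)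
    (h4a : P.ConvTo p4 a4) (h4b : P.ConvTo q4 b4) (h4c : P.ConvTo r4 c4)
    (h5a : P.ConvTo p5 a5) (h5b : P.ConvTo q5 b5) (h5c : P.ConvTo r5 c5)
    (g1 : ∀ s s' : ℝ, 0 < s' → s' < s → P.G a u u s' ≤ P.G a1 b1 c1 s)
    (g2 : ∀ s s' : ℝ, 0 < s' → s' < s → P.G a u u s' ≤ P.G a2 b2 c2 s)
    (g3 : ∀ s s' : ℝ, 0 < s' → s' < s → P.G a u u s' ≤ P.G a3 b3 c3 s)
    (g4 : ∀ s s' : ℝ, 0 < s' → s' < s → P.G a u u s' ≤ P.G a4 b4 c4 s)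
    (g5 : ∀ s s' : ℝ, 0 < s' → s' < s → P.G a u u s' ≤ P.G a5 b5 c5 s)
    (hineq : ∀ n, ∀ t : ℝ, 0 < t →
      min (P.G (p1 n) (q1 n) (r1 n) t) (min (P.G (p2 n) (q2 n) (r2 n) t)
        (min (P.G (p3 n) (q3 n) (r3 n) t) (min (P.G (p4 n) (q4 n) (r4 n) t)
          (P.G (p5 n) (q5 n) (r5 n) t)))) ≤ P.G (p n) (q n) (r n) (k * t)) : a = u := by
  refine pgm_master P hstar hk0 hk2 a hp hq hr ?_
  intro t ht s' hs'0 hs't ε hε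
  set s'' := (s' + t) / 2 with hs''def
  have hs''0 : 0 < s'' := by rw [hs''def]; linarith
  have hs''t : s'' < t := by rw [hs''def]; linarith
  have hs's'' : s' < s'' := by rw [hs''def]; linarith
  obtain ⟨N1, hN1⟩ := pgm_glim' P hstar h1a h1b h1c hs''0 hs''t hε
  obtain ⟨N2, hN2⟩ := pgm_glim' P hstar h2a h2b h2c hs''0 hs''t hε
  obtain ⟨N3, hN3⟩ := pgm_glim' P hstar h3a h3b h3c hs''0 hs''t hε
  obtain ⟨N4, hN4⟩ := pgm_glim' P hstar h4a h4b h4c hs''0 hs''t hε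
  obtain ⟨N5, hN5⟩ := pgm_glim' P hstar h5a h5b h5c hs''0 hs''t hε
  refine ⟨N1+N2+N3+N4+N5, fun n hn => ?_⟩
  have e1 : P.G a u u s' - ε ≤ P.G (p1 n) (q1 n) (r1 n) t :=
    le_trans (by linarith [g1 s'' s' hs'0 hs's'']) (hN1 n (by omega))
  have e2 : P.G a u u s' - ε ≤ P.G (p2 n) (q2 n) (r2 n) t :=
    le_trans (by linarith [g2 s'' s' hs'0 hs's'']) (hN2 n (by omega))
  have e3 : P.G a u u s' - ε ≤ P.G (p3 n) (q3 n) (r3 n) t :=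
    le_trans (by linarith [g3 s'' s' hs'0 hs's'']) (hN3 n (by omega))
  have e4 : P.G a u u s' - ε ≤ P.G (p4 n) (q4 n) (r4 n) t :=
    le_trans (by linarith [g4 s'' s' hs'0 hs's'']) (hN4 n (by omega))
  have e5 : P.G a u u s' - ε ≤ P.G (p5 n) (q5 n) (r5 n) t :=
    le_trans (by linarith [g5 s'' s' hs'0 hs's'']) (hN5 n (by omega))
  exact le_trans (le_min e1 (le_min e2 (le_min e3 (le_min e4 e5)))) (hineq n t ht)

end Helpers2

theorem stmt9 {X : Type*} (P : PGM X) (hcomplete : P.Complete)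
    (hstar : ∀ a ∈ Set.Icc (0:ℝ) 1, a ≤ P.star a a)
    (A B C D S T : X → X)
    (ha : ∃ x : ℕ → X, Function.Injective x ∧
      ∀ n : ℕ,
        T (x (3 * n + 1)) = A (x (3 * n)) ∧
        D (x (3 * n + 2)) = B (x (3 * n + 1)) ∧
        S (x (3 * n + 3)) = C (x (3 * n + 2)) ∧
        A (x (3 * n)) ≠ B (x (3 * n + 1)) ∧
        B (x (3 * n + 1)) ≠ C (x (3 * n + 2)) ∧
        C (x (3 * n + 2)) ≠ A (x (3 * n + 3)))
    (hAS : P.Compatible2 A S) (hBT : P.Compatible2 B T) (hCD : P.Compatible2 C D)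
    (hD : P.Cont D) (hS : P.Cont S) (hT : P.Cont T)
    (hd : ∃ k : ℝ, 0 < k ∧ k ≤ 1 / 2 ∧
      ∀ x y z : X, ∀ t > (0:ℝ),
        P.G (A x) (B y) (C z) (k * t) ≥
          P.star (P.G (S x) (T y) (D z) t)
            (P.star (P.G (S x) (A x) (D z) t)
              (P.star (P.G (A x) (B y) (C z) t)
                (P.star (P.G (T y) (B y) (C z) t)
                  (P.G (S x) (C z) (D z) (2 * t)))))) :
    ∃! z : X, A z = z ∧ B z = z ∧ C z = z ∧ D z = z ∧ S z = z ∧ T z = z := by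
  classical
  obtain ⟨k, hk0, hk2, hd⟩ := hd
  obtain ⟨x, hxinj, hx⟩ := ha
  set y : ℕ → X := fun n => if n % 3 = 0 then A (x n) else if n % 3 = 1 then B (x n) else C (x n)
    with hydef
  have y0 : ∀ m, y (3*m) = A (x (3*m)) := by
    intro m
    simp only [hydef]
    rw [if_pos (by omega : (3*m) % 3 = 0)]
  have y1 : ∀ m, y (3*m+1) = B (x (3*m+1)) := by
    intro m
    simp only [hydef]
    rw [if_neg (by omega : ¬ (3*m+1) % 3 = 0), if_pos (by omega : (3*m+1) % 3 = 1)]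
  have y2 : ∀ m, y (3*m+2) = C (x (3*m+2)) := by
    intro m
    simp only [hydef]
    rw [if_neg (by omega : ¬ (3*m+2) % 3 = 0), if_neg (by omega : ¬ (3*m+2) % 3 = 1)]
  have yA3 : ∀ m, A (x (3*m+3)) = y (3*m+3) := by
    intro m
    have h := y0 (m+1)
    rw [show 3*(m+1) = 3*m+3 by ring] at h
    exact h.symm
  have yB4 : ∀ m, B (x (3*m+4)) = y (3*m+4) := by
    intro m
    have h := y1 (m+1)
    rw [show 3*(m+1)+1 = 3*m+4 by ring] at h
    exact h.symm
  have yC5 : ∀ m, C (x (3*m+5)) = y (3*m+5) := by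
    intro m
    have h := y2 (m+1)
    rw [show 3*(m+1)+2 = 3*m+5 by ring] at h
    exact h.symm
  have hTy : ∀ m, T (x (3*m+1)) = y (3*m) := fun m => ((hx m).1).trans (y0 m).symm
  have hDy : ∀ m, D (x (3*m+2)) = y (3*m+1) := fun m => ((hx m).2.1).trans (y1 m).symm
  have hSy : ∀ m, S (x (3*m+3)) = y (3*m+2) := fun m => ((hx m).2.2.1).trans (y2 m).symm
  have hTy4 : ∀ m, T (x (3*m+4)) = y (3*m+3) := by
    intro m
    have h := hTy (m+1)
    rw [show 3*(m+1)+1 = 3*m+4 by ring, show 3*(m+1) = 3*m+3 by ring] at h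
    exact h
  have hDy5 : ∀ m, D (x (3*m+5)) = y (3*m+4) := by
    intro m
    have h := hDy (m+1)
    rw [show 3*(m+1)+2 = 3*m+5 by ring, show 3*(m+1)+1 = 3*m+4 by ring] at h
    exact h
  have hyne : ∀ n, y n ≠ y (n+1) := by
    intro n
    rcases (by omega : n % 3 = 0 ∨ n % 3 = 1 ∨ n % 3 = 2) with h | h | h
    · have e1 : n = 3*(n/3) := by omega
      rw [e1, y0, show 3*(n/3)+1 = 3*(n/3)+1 from rfl, y1]
      exact (hx (n/3)).2.2.2.1
    · have e1 : n = 3*(n/3)+1 := by omega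
      rw [e1, y1, show 3*(n/3)+1+1 = 3*(n/3)+2 by omega, y2]
      exact (hx (n/3)).2.2.2.2.1
    · have e1 : n = 3*(n/3)+2 := by omega
      rw [e1, y2, show 3*(n/3)+2+1 = 3*(n/3)+3 by omega, ← yA3]
      exact (hx (n/3)).2.2.2.2.2
  set F : ℕ → ℝ → ℝ := fun n t => P.G (y n) (y (n+1)) (y (n+2)) t with hFdef
  have hF : ∀ n t, F n t = P.G (y n) (y (n+1)) (y (n+2)) t := fun n t => rfl
  have hFle1 : ∀ n t, F n t ≤ 1 := fun n t => pgm_le1 P _ _ _ _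
  have hFmono : ∀ n, Monotone (F n) := fun n => P.G_mono _ _ _
  -- T5-style bound used in cases 1 and 2
  have hT5 : ∀ m, ∀ t : ℝ, 0 < t →
      F (3*m) t ≤ P.G (y (3*m+2)) (y (3*m+2)) (y (3*m+1)) (2*t) := by
    intro m t ht
    have htri : P.G (y (3*m+2)) (y (3*m+1)) (y (3*m)) t ≤
        P.G (y (3*m+2)) (y (3*m+2)) (y (3*m+1)) t :=
      P.G_tri _ _ _ t (Ne.symm (hyne (3*m))) ht
    have hrev : F (3*m) t = P.G (y (3*m+2)) (y (3*m+1)) (y (3*m)) t :=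
      pgm_rev P (y (3*m)) (y (3*m+1)) (y (3*m+2)) t
    rw [hrev]
    exact le_trans htri (P.G_mono _ _ _ (by linarith))
  -- contraction cases
  have case1 : ∀ m, ∀ t : ℝ, 0 < t →
      min (F (3*m) t) (F (3*m+1) t) ≤ F (3*m+1) (k*t) := by
    intro m t ht
    have hdd := hd (x (3*m+3)) (x (3*m+1)) (x (3*m+2)) t ht
    rw [yA3 m, ← y1 m, ← y2 m, hTy m, hDy m, hSy m] at hdd
    have hlhs : P.G (y (3*m+3)) (y (3*m+1)) (y (3*m+2)) (k*t) = F (3*m+1) (k*t) :=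
      (pgm_cyc P (y (3*m+1)) (y (3*m+2)) (y (3*m+3)) (k*t)).symm
    rw [hlhs] at hdd
    refine le_trans (le_trans ?_ (pgm_min5_le_star P hstar _ _ _ _ _ (P.G_mem _ _ _ _)
      (P.G_mem _ _ _ _) (P.G_mem _ _ _ _) (P.G_mem _ _ _ _) (P.G_mem _ _ _ _))) hdd
    have e1 : P.G (y (3*m+2)) (y (3*m)) (y (3*m+1)) t = F (3*m) t :=
      (pgm_cyc P (y (3*m)) (y (3*m+1)) (y (3*m+2)) t).symm
    have e2 : P.G (y (3*m+2)) (y (3*m+3)) (y (3*m+1)) t = F (3*m+1) t := by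
      rw [hF]
      rw [pgm_cyc P (y (3*m+1)) (y (3*m+2)) (y (3*m+3)) t]
      exact (pgm_cyc P (y (3*m+3)) (y (3*m+1)) (y (3*m+2)) t).symm
    have e3 : P.G (y (3*m+3)) (y (3*m+1)) (y (3*m+2)) t = F (3*m+1) t :=
      (pgm_cyc P (y (3*m+1)) (y (3*m+2)) (y (3*m+3)) t).symm
    refine le_min (e1 ▸ min_le_left _ _) (le_min (e2 ▸ min_le_right _ _)
      (le_min (e3 ▸ min_le_right _ _) (le_min (min_le_left _ _)
      (le_trans (min_le_left _ _) (hT5 m t ht)))))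
  have case2 : ∀ m, ∀ t : ℝ, 0 < t →
      min (min (F (3*m+1) t) (F (3*m) t)) (F (3*m+2) t) ≤ F (3*m+2) (k*t) := by
    intro m t ht
    have hdd := hd (x (3*m+3)) (x (3*m+4)) (x (3*m+2)) t ht
    rw [yA3 m, yB4 m, ← y2 m, hTy4 m, hDy m, hSy m] at hdd
    have ef : ∀ s : ℝ, P.G (y (3*m+3)) (y (3*m+4)) (y (3*m+2)) s = F (3*m+2) s := by
      intro s
      rw [hF]
      rw [pgm_cyc P (y (3*m+2)) (y (3*m+3)) (y (3*m+4)) s]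
      exact (pgm_cyc P (y (3*m+4)) (y (3*m+2)) (y (3*m+3)) s).symm
    rw [ef (k*t)] at hdd
    refine le_trans (le_trans ?_ (pgm_min5_le_star P hstar _ _ _ _ _ (P.G_mem _ _ _ _)
      (P.G_mem _ _ _ _) (P.G_mem _ _ _ _) (P.G_mem _ _ _ _) (P.G_mem _ _ _ _))) hdd
    have e1 : P.G (y (3*m+2)) (y (3*m+3)) (y (3*m+1)) t = F (3*m+1) t := by
      rw [hF]
      rw [pgm_cyc P (y (3*m+1)) (y (3*m+2)) (y (3*m+3)) t]
      exact (pgm_cyc P (y (3*m+3)) (y (3*m+1)) (y (3*m+2)) t).symm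
    refine le_min (e1 ▸ le_trans (min_le_left _ _) (min_le_left _ _))
      (le_min (e1 ▸ le_trans (min_le_left _ _) (min_le_left _ _))
      (le_min ((ef t) ▸ min_le_right _ _) (le_min ((ef t) ▸ min_le_right _ _)
      (le_trans (le_trans (min_le_left _ _) (min_le_right _ _)) (hT5 m t ht)))))
  have case3 : ∀ m, ∀ t : ℝ, 0 < t →
      min (min (F (3*m+2) t) (F (3*m+1) t)) (F (3*m+3) t) ≤ F (3*m+3) (k*t) := by
    intro m t ht
    have hdd := hd (x (3*m+3)) (x (3*m+4)) (x (3*m+5)) t ht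
    rw [yA3 m, yB4 m, yC5 m, hTy4 m, hDy5 m, hSy m] at hdd
    -- LHS and T3, T4 are F (3*m+3) directly
    refine le_trans (le_trans ?_ (pgm_min5_le_star P hstar _ _ _ _ _ (P.G_mem _ _ _ _)
      (P.G_mem _ _ _ _) (P.G_mem _ _ _ _) (P.G_mem _ _ _ _) (P.G_mem _ _ _ _))) hdd
    have hT5' : min (F (3*m+1) t) (F (3*m+3) t) ≤
        P.G (y (3*m+2)) (y (3*m+5)) (y (3*m+4)) (2*t) := by
      have hrect := pgm_rect_min P hstar (y (3*m+2)) (y (3*m+5)) (y (3*m+4)) (y (3*m+3))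
        (le_of_lt ht) (le_of_lt ht)
      rw [show t + t = 2*t by ring] at hrect
      refine le_trans (le_min ?_ ?_) hrect
      · -- F (3*m+1) t ≤ G (y (3*m+2)) (y (3*m+3)) (y (3*m+3)) t
        refine le_trans (min_le_left _ _) ?_
        have htri : P.G (y (3*m+3)) (y (3*m+2)) (y (3*m+1)) t ≤
            P.G (y (3*m+3)) (y (3*m+3)) (y (3*m+2)) t :=
          P.G_tri _ _ _ t (Ne.symm (hyne (3*m+1))) ht
        have hrev : F (3*m+1) t = P.G (y (3*m+3)) (y (3*m+2)) (y (3*m+1)) t :=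
          pgm_rev P (y (3*m+1)) (y (3*m+2)) (y (3*m+3)) t
        have hc : P.G (y (3*m+3)) (y (3*m+3)) (y (3*m+2)) t =
            P.G (y (3*m+2)) (y (3*m+3)) (y (3*m+3)) t :=
          pgm_cyc P (y (3*m+3)) (y (3*m+3)) (y (3*m+2)) t
        rw [hrev, ← hc]
        exact htri
      · -- F (3*m+3) t ≤ G (y (3*m+3)) (y (3*m+5)) (y (3*m+4)) t
        refine le_trans (min_le_right _ _) ?_
        have : F (3*m+3) t = P.G (y (3*m+3)) (y (3*m+5)) (y (3*m+4)) t := by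
          rw [hF]
          exact P.G_swap (y (3*m+3)) (y (3*m+4)) (y (3*m+5)) t
        rw [this]
    refine le_min (le_trans (min_le_left _ _) (min_le_left _ _))
      (le_min (le_trans (min_le_left _ _) (min_le_left _ _))
      (le_min (min_le_right _ _) (le_min (min_le_right _ _)
      (le_trans (le_min (le_trans (min_le_left _ _) (min_le_right _ _)) (min_le_right _ _)) hT5'))))
  -- uniform recurrence with the self-term
  have rec0 : ∀ n, 1 ≤ n → ∀ t : ℝ, 0 < t →
      min (min (F (n-1) t) (F (n-2) t)) (F n t) ≤ F n (k*t) := by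
    intro n hn t ht
    rcases (by omega : n % 3 = 0 ∨ n % 3 = 1 ∨ n % 3 = 2) with h | h | h
    · set m := (n-3)/3 with hm
      have e0 : n = 3*m+3 := by omega
      have e1 : n - 1 = 3*m+2 := by omega
      have e2 : n - 2 = 3*m+1 := by omega
      rw [e1, e2, e0]
      exact case3 m t ht
    · set m := n/3 with hm
      have e0 : n = 3*m+1 := by omega
      have e1 : n - 1 = 3*m := by omega
      rw [e1, e0]
      refine le_trans ?_ (case1 m t ht)
      exact le_min (le_trans (min_le_left _ _) (min_le_left _ _)) (min_le_right _ _)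
    · set m := n/3 with hm
      have e0 : n = 3*m+2 := by omega
      have e1 : n - 1 = 3*m+1 := by omega
      have e2 : n - 2 = 3*m := by omega
      rw [e1, e2, e0]
      exact case2 m t ht
  -- drop the self-term
  have rec1 : ∀ n, 1 ≤ n → ∀ t : ℝ, 0 < t →
      min (F (n-1) t) (F (n-2) t) ≤ F n (k*t) := by
    intro n hn t ht
    have hcmono : Monotone (fun s => min (F (n-1) s) (F (n-2) s)) :=
      Monotone.min (hFmono _) (hFmono _)
    have hiter : ∀ m : ℕ, min (min (F (n-1) t) (F (n-2) t)) (F n (t / k^m)) ≤ F n (k*t) := by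
      intro m
      induction m with
      | zero =>
        have h0 := rec0 n hn t ht
        simpa using h0
      | succ m ih =>
        have hkpow : (0:ℝ) < k^(m+1) := pow_pos hk0 _
        have htk : 0 < t / k^(m+1) := div_pos ht hkpow
        have h1 := rec0 n hn _ htk
        have hkk : k * (t / k^(m+1)) = t / k^m := by
          field_simp
          ring
        rw [hkk] at h1
        refine le_trans ?_ ih
        refine le_min (min_le_left _ _) ?_
        refine le_trans ?_ h1
        refine le_min ?_ (min_le_right _ _)
        refine le_trans (min_le_left _ _) (hcmono ?_)
        have hle1 : k^(m+1) ≤ 1 := by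
          apply pow_le_one₀ (le_of_lt hk0)
          linarith
        rw [le_div_iff₀ hkpow]
        exact mul_le_of_le_one_right (le_of_lt ht) hle1
    have hlim : Filter.Tendsto (fun m : ℕ => F n (t / k^m)) Filter.atTop (nhds 1) := by
      have hinv : (1:ℝ) < k⁻¹ := by
        rw [lt_inv_comm₀ (by norm_num) hk0]
        linarith
      have h1 : Filter.Tendsto (fun m : ℕ => t * (k⁻¹)^m) Filter.atTop Filter.atTop :=
        Filter.Tendsto.const_mul_atTop ht (tendsto_pow_atTop_atTop_of_one_lt hinv)
      have heq2 : (fun m : ℕ => F n (t / k^m)) =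
          (fun s => P.G (y n) (y (n+1)) (y (n+2)) s) ∘ (fun m : ℕ => t * (k⁻¹)^m) := by
        funext m
        simp only [Function.comp, hF, div_eq_mul_inv, inv_pow]
      rw [heq2]
      exact (P.G_tendsto_one _ _ _).comp h1
    have hlim2 : Filter.Tendsto
        (fun m : ℕ => min (min (F (n-1) t) (F (n-2) t)) (F n (t / k^m)))
        Filter.atTop (nhds (min (min (F (n-1) t) (F (n-2) t)) 1)) :=
      Filter.Tendsto.min tendsto_const_nhds hlim
    have hfin := le_of_tendsto hlim2 (Filter.Eventually.of_forall hiter)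
    rwa [min_eq_left (le_trans (min_le_left _ _) (hFle1 _ _))] at hfin
  -- lower bound by gmin
  set gmin : ℝ → ℝ := fun s => min (F 0 s) (F 1 s) with hgmindef
  have hgmin : ∀ s, gmin s = min (F 0 s) (F 1 s) := fun s => rfl
  have gminmono : Monotone gmin := Monotone.min (hFmono 0) (hFmono 1)
  have gminle1 : ∀ s, gmin s ≤ 1 := fun s => le_trans (min_le_left _ _) (hFle1 0 s)
  have Flow : ∀ n, ∀ t : ℝ, 0 < t → gmin (t * 2^(n/2)) ≤ F n t := by
    intro n
    induction n using Nat.strong_induction_on with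
    | _ n ih =>
      match n, ih with
      | 0, _ =>
        intro t ht
        simp only [Nat.zero_div, pow_zero, mul_one, hgmin]
        exact min_le_left _ _
      | 1, _ =>
        intro t ht
        simp only [show (1:ℕ)/2 = 0 from rfl, pow_zero, mul_one, hgmin]
        exact min_le_right _ _
      | (n+2), ih =>
        intro t ht
        have htk : 0 < t / k := div_pos ht hk0
        have h1 := rec1 (n+2) (by omega) (t/k) htk
        rw [show k * (t/k) = t by field_simp] at h1
        have hred1 : (n+2) - 1 = n+1 := by omega
        have hred2 : (n+2) - 2 = n := by omega
        rw [hred1, hred2] at h1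
        have e1 := ih (n+1) (by omega) (t/k) htk
        have e2 := ih n (by omega) (t/k) htk
        refine le_trans ?_ h1
        have h2t : 2*t ≤ t/k := by
          rw [le_div_iff₀ hk0]
          nlinarith
        have hp0 : (0:ℝ) ≤ 2^(n/2) := by positivity
        have hkey : t * 2^((n+2)/2) ≤ (t/k) * 2^(n/2) := by
          have : (n+2)/2 = n/2 + 1 := by omega
          rw [this, pow_succ]
          nlinarith
        refine le_min (le_trans ?_ e1) (le_trans ?_ e2)
        · apply gminmono
          refine le_trans hkey ?_
          have hmle : (2:ℝ)^(n/2) ≤ 2^((n+1)/2) := by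
            apply pow_le_pow_right₀ (by norm_num)
            omega
          nlinarith [div_nonneg (le_of_lt ht) (le_of_lt hk0)]
        · exact gminmono hkey
  -- one-step bound
  have powlem : ∀ i : ℕ, ((7:ℝ)/5)^(i+1) ≤ 2^(i/2+1) := by
    intro i
    have ha : (0:ℝ) ≤ (7/5)^(i+1) := by positivity
    have hb : (0:ℝ) ≤ (2:ℝ)^(i/2+1) := by positivity
    have hsq : (((7:ℝ)/5)^(i+1))^2 ≤ ((2:ℝ)^(i/2+1))^2 := by
      have l1 : (((7:ℝ)/5)^(i+1))^2 = ((49:ℝ)/25)^(i+1) := by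
        rw [← pow_mul, mul_comm, pow_mul]
        norm_num
      have l2 : (((2:ℝ))^(i/2+1))^2 = (2:ℝ)^(2*(i/2+1)) := by
        rw [← pow_mul, mul_comm]
      have l3 : ((49:ℝ)/25)^(i+1) ≤ (2:ℝ)^(i+1) := by
        apply pow_le_pow_left₀ (by norm_num) (by norm_num)
      have l4 : (2:ℝ)^(i+1) ≤ (2:ℝ)^(2*(i/2+1)) := by
        apply pow_le_pow_right₀ (by norm_num)
        omega
      rw [l1, l2]
      exact le_trans l3 l4
    nlinarith
  have stepb : ∀ i : ℕ, ∀ u' : ℝ, 0 < u' →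
      gmin (u'/2 * (7/5)^(i+1)) ≤ P.G (y (i+1)) (y (i+2)) (y (i+2)) u' := by
    intro i u' hu
    have htri : P.G (y (i+2)) (y (i+1)) (y i) u' ≤ P.G (y (i+2)) (y (i+2)) (y (i+1)) u' :=
      P.G_tri _ _ _ u' (Ne.symm (hyne i)) hu
    have hrev : F i u' = P.G (y (i+2)) (y (i+1)) (y i) u' :=
      pgm_rev P (y i) (y (i+1)) (y (i+2)) u'
    have hc : P.G (y (i+2)) (y (i+2)) (y (i+1)) u' = P.G (y (i+1)) (y (i+2)) (y (i+2)) u' :=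
      pgm_cyc P (y (i+2)) (y (i+2)) (y (i+1)) u'
    have hstep : F i u' ≤ P.G (y (i+1)) (y (i+2)) (y (i+2)) u' := by
      rw [hrev, ← hc]
      exact htri
    refine le_trans ?_ (le_trans (Flow i u' hu) hstep)
    apply gminmono
    have hp := powlem i
    have hps : (2:ℝ)^(i/2+1) = 2 * 2^(i/2) := by rw [pow_succ]; ring
    rw [hps] at hp
    calc u'/2 * (7/5:ℝ)^(i+1) ≤ u'/2 * (2 * 2^(i/2)) :=
          mul_le_mul_of_nonneg_left hp (by linarith)
    _ = u' * 2^(i/2) := by ring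
  -- the chain lemma
  have chainQ : ∀ j, ∀ n, 1 ≤ n → ∀ s : ℝ, 0 < s →
      gmin (s/8 * (7/5)^n) ≤ P.G (y n) (y (n+j)) (y (n+j)) s := by
    intro j
    induction j with
    | zero =>
      intro n hn s hs
      have : P.G (y n) (y (n+0)) (y (n+0)) s = 1 := pgm_one P hs
      rw [this]
      exact gminle1 _
    | succ j ihj =>
      intro n hn s hs
      obtain ⟨i, rfl⟩ : ∃ i, n = i + 1 := ⟨n - 1, by omega⟩
      have hrect := pgm_rect_min P hstar (y (i+1)) (y (i+1+(j+1))) (y (i+1+(j+1))) (y (i+2))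
        (show (0:ℝ) ≤ 3*s/4 by linarith) (show (0:ℝ) ≤ s/4 by linarith)
      rw [show s/4 + 3*s/4 = s by ring] at hrect
      refine le_trans (le_min ?_ ?_) hrect
      · have h1 := stepb i (s/4) (by linarith)
        refine le_trans ?_ h1
        apply gminmono
        have hp : (0:ℝ) ≤ (7/5)^(i+1) := by positivity
        nlinarith
      · have h2 := ihj (i+2) (by omega) (3*s/4) (by linarith)
        rw [show i+2+j = i+1+(j+1) by omega] at h2
        refine le_trans ?_ h2
        apply gminmono
        have hp : (0:ℝ) ≤ (7/5)^(i+1) := by positivity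
        have hq : ((7:ℝ)/5)^(i+2) = (7/5) * (7/5)^(i+1) := by
          rw [pow_succ]
          ring
        rw [hq]
        nlinarith
  have hup : ∀ n a : ℕ, 1 ≤ n → n ≤ a → ∀ s : ℝ, 0 < s →
      gmin (s/8 * (7/5)^n) ≤ P.G (y n) (y a) (y a) s := by
    intro n a hn hna s hs
    have h := chainQ (a - n) n hn s hs
    rw [show n + (a - n) = a by omega] at h
    exact h
  -- Cauchy
  have hcauchy : P.IsCauchy y := by
    intro ε hε δ hδ0 hδ1
    have hg1 : Filter.Tendsto gmin Filter.atTop (nhds 1) := by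
      have := Filter.Tendsto.min (P.G_tendsto_one (y 0) (y 1) (y 2))
        (P.G_tendsto_one (y 1) (y 2) (y 3))
      simpa using this
    have hpow : Filter.Tendsto (fun M : ℕ => ε/32 * (7/5 : ℝ)^M) Filter.atTop Filter.atTop :=
      Filter.Tendsto.const_mul_atTop (by linarith) (tendsto_pow_atTop_atTop_of_one_lt (by norm_num))
    obtain ⟨M0, hM0⟩ := pgm_ev_gt (hg1.comp hpow) hδ0
    refine ⟨M0 + 1, fun n hn m hm l hl => ?_⟩
    set a := n + m + l with hadef
    have hna : n ≤ a := by omega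
    have hma : m ≤ a := by omega
    have hla : l ≤ a := by omega
    have leaf : ∀ i : ℕ, M0 < i → i ≤ a → ∀ s : ℝ, ε/4 ≤ s →
        1 - δ < P.G (y i) (y a) (y a) s := by
      intro i hi hia s hslb
      have hs : 0 < s := by linarith
      have h1 := hup i a (by omega) hia s hs
      have h2 : ε/32 * (7/5 : ℝ)^M0 ≤ s/8 * (7/5)^i := by
        have hple : ((7:ℝ)/5)^M0 ≤ (7/5)^i := by
          apply pow_le_pow_right₀ (by norm_num)
          omega
        have hp0 : (0:ℝ) ≤ (7/5 : ℝ)^M0 := by positivity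
        nlinarith
      have := hM0 M0 (le_refl _)
      calc 1 - δ < gmin (ε/32 * (7/5:ℝ)^M0) := this
      _ ≤ gmin (s/8 * (7/5)^i) := gminmono h2
      _ ≤ _ := h1
    have inner : 1 - δ < P.G (y a) (y m) (y l) (ε/2) := by
      have hrect := pgm_rect_min P hstar (y m) (y l) (y a) (y a)
        (show (0:ℝ) ≤ ε/4 by linarith) (show (0:ℝ) ≤ ε/4 by linarith)
      rw [show ε/4 + ε/4 = ε/2 by ring] at hrect
      have hpm : P.G (y m) (y l) (y a) (ε/2) = P.G (y a) (y m) (y l) (ε/2) :=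
        pgm_cyc P (y m) (y l) (y a) (ε/2)
      rw [hpm] at hrect
      refine lt_of_lt_of_le (lt_min ?_ ?_) hrect
      · exact leaf m (by omega) hma (ε/4) (le_refl _)
      · have hpm2 : P.G (y l) (y a) (y a) (ε/4) = P.G (y a) (y l) (y a) (ε/4) :=
          pgm_cyc P (y l) (y a) (y a) (ε/4)
        rw [← hpm2]
        exact leaf l (by omega) hla (ε/4) (le_refl _)
    have hrect := pgm_rect_min P hstar (y n) (y m) (y l) (y a)
      (show (0:ℝ) ≤ ε/2 by linarith) (show (0:ℝ) ≤ ε/2 by linarith)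
    rw [show ε/2 + ε/2 = ε by ring] at hrect
    refine lt_of_lt_of_le (lt_min ?_ inner) hrect
    exact leaf n (by omega) hna (ε/2) (by linarith)
  obtain ⟨u, conv⟩ := hcomplete y hcauchy
  -- subsequence convergences
  have conv3 : P.ConvTo (fun n => y (3*n)) u := pgm_conv_sub P conv _ (fun n => by omega)
  have conv31 : P.ConvTo (fun n => y (3*n+1)) u := pgm_conv_sub P conv _ (fun n => by omega)
  have conv32 : P.ConvTo (fun n => y (3*n+2)) u := pgm_conv_sub P conv _ (fun n => by omega)
  have conv33 : P.ConvTo (fun n => y (3*n+3)) u := pgm_conv_sub P conv _ (fun n => by omega)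
  have convu : P.ConvTo (fun _ => u) u := pgm_conv_const P u
  -- generic "good" lemmas
  have gone : ∀ (a : X) (s s' : ℝ), 0 < s' → s' < s → P.G a u u s' ≤ P.G u u u s := by
    intro a s s' h0 h1
    rw [pgm_one P (lt_trans h0 h1)]
    exact pgm_le1 P _ _ _ _
  have gmid : ∀ (a : X) (s s' : ℝ), 0 < s' → s' < s → P.G a u u s' ≤ P.G u a u s := by
    intro a s s' h0 h1
    rw [P.G_rot u a u s]
    exact P.G_mono _ _ _ (le_of_lt h1)
  have glast : ∀ (a : X) (s s' : ℝ), 0 < s' → s' < s → P.G a u u s' ≤ P.G u u a s := by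
    intro a s s' h0 h1
    rw [pgm_cyc P u u a s]
    exact P.G_mono _ _ _ (le_of_lt h1)
  have gfst : ∀ (a : X) (s s' : ℝ), 0 < s' → s' < s → P.G a u u s' ≤ P.G a u u s :=
    fun a s s' _ h1 => P.G_mono _ _ _ (le_of_lt h1)
  have ghpp : ∀ (a : X) (s s' : ℝ), 0 < s' → s' < s → P.G a u u s' ≤ P.G a a u s :=
    fun a s s' h0 h1 => pgm_hpp P hstar conv hyne a h0 h1
  -- Step 1 : S u = u
  have convAw : P.ConvTo (fun n => A (x (3*n+3))) u := by
    rw [show (fun n => A (x (3*n+3))) = fun n => y (3*n+3) from funext yA3]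
    exact conv33
  have convSw : P.ConvTo (fun n => S (x (3*n+3))) u := by
    rw [show (fun n => S (x (3*n+3))) = fun n => y (3*n+2) from funext hSy]
    exact conv32
  have convSSw : P.ConvTo (fun n => S (S (x (3*n+3)))) (S u) := pgm_cont_apply P hS convSw
  have hclAS := hAS (fun n => x (3*n+3)) u convAw convSw convSw
  have hcl12 : ∀ t > (0:ℝ), Filter.Tendsto
      (fun n => P.G (A (S (x (3*n+3)))) (S (S (x (3*n+3)))) (S (S (x (3*n+3)))) t)
      Filter.atTop (nhds 1) :=
    fun t ht => hclAS _ _ (Set.mem_insert _ _)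
      (Set.mem_insert_of_mem _ (Set.mem_insert _ _)) t ht
  have hcl21 : ∀ t > (0:ℝ), Filter.Tendsto
      (fun n => P.G (S (S (x (3*n+3)))) (A (S (x (3*n+3)))) (A (S (x (3*n+3)))) t)
      Filter.atTop (nhds 1) :=
    fun t ht => hclAS _ _ (Set.mem_insert_of_mem _ (Set.mem_insert _ _))
      (Set.mem_insert _ _) t ht
  have convASw : P.ConvTo (fun n => A (S (x (3*n+3)))) (S u) :=
    pgm_conv_of_close P hstar hcl12 hcl21 convSSw
  have hSu : S u = u := by
    refine pgm_step P hstar hk0 hk2 (S u) convASw conv31 conv32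
      convSSw conv3 conv31
      convSSw convASw conv31
      convASw conv31 conv32
      conv3 conv31 conv32
      convSSw conv32 conv31
      (gfst (S u)) (ghpp (S u)) (gfst (S u)) (gone (S u)) (gfst (S u)) ?_
    intro n t ht
    have hdd := hd (S (x (3*n+3))) (x (3*n+1)) (x (3*n+2)) t ht
    rw [← y1 n, ← y2 n, hTy n, hDy n] at hdd
    exact le_trans (min_le_min_left _ (min_le_min_left _ (min_le_min_left _
      (min_le_min_left _ (P.G_mono _ _ _ (by linarith : t ≤ 2*t))))))
      (le_trans (pgm_min5_le_star P hstar _ _ _ _ _ (P.G_mem _ _ _ _) (P.G_mem _ _ _ _)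
        (P.G_mem _ _ _ _) (P.G_mem _ _ _ _) (P.G_mem _ _ _ _)) hdd)
  -- Step 2 : T u = u
  have convBv : P.ConvTo (fun n => B (x (3*n+1))) u := by
    rw [show (fun n => B (x (3*n+1))) = fun n => y (3*n+1) from funext (fun n => (y1 n).symm)]
    exact conv31
  have convTv : P.ConvTo (fun n => T (x (3*n+1))) u := by
    rw [show (fun n => T (x (3*n+1))) = fun n => y (3*n) from funext hTy]
    exact conv3
  have convTTv : P.ConvTo (fun n => T (T (x (3*n+1)))) (T u) := pgm_cont_apply P hT convTv
  have hclBT := hBT (fun n => x (3*n+1)) u convBv convTv convTv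
  have hclBT12 : ∀ t > (0:ℝ), Filter.Tendsto
      (fun n => P.G (B (T (x (3*n+1)))) (T (T (x (3*n+1)))) (T (T (x (3*n+1)))) t)
      Filter.atTop (nhds 1) :=
    fun t ht => hclBT _ _ (Set.mem_insert _ _)
      (Set.mem_insert_of_mem _ (Set.mem_insert _ _)) t ht
  have hclBT21 : ∀ t > (0:ℝ), Filter.Tendsto
      (fun n => P.G (T (T (x (3*n+1)))) (B (T (x (3*n+1)))) (B (T (x (3*n+1)))) t)
      Filter.atTop (nhds 1) :=
    fun t ht => hclBT _ _ (Set.mem_insert_of_mem _ (Set.mem_insert _ _))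
      (Set.mem_insert _ _) t ht
  have convBTv : P.ConvTo (fun n => B (T (x (3*n+1)))) (T u) :=
    pgm_conv_of_close P hstar hclBT12 hclBT21 convTTv
  have hTu : T u = u := by
    refine pgm_step P hstar hk0 hk2 (T u) convBTv conv33 conv32
      conv32 convTTv conv31
      conv32 conv33 conv31
      conv33 convBTv conv32
      convTTv convBTv conv32
      conv32 conv32 conv31
      (gmid (T u)) (gone (T u)) (gmid (T u)) (ghpp (T u)) (gone (T u)) ?_
    intro n t ht
    have hdd := hd (x (3*n+3)) (T (x (3*n+1))) (x (3*n+2)) t ht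
    rw [yA3 n, ← y2 n, hSy n, hDy n] at hdd
    rw [P.G_rot (y (3*n+3)) (B (T (x (3*n+1)))) (y (3*n+2)) (k*t)] at hdd
    exact le_trans (min_le_min_left _ (min_le_min_left _ (min_le_min_left _
      (min_le_min_left _ (P.G_mono _ _ _ (by linarith : t ≤ 2*t))))))
      (le_trans (pgm_min5_le_star P hstar _ _ _ _ _ (P.G_mem _ _ _ _) (P.G_mem _ _ _ _)
        (P.G_mem _ _ _ _) (P.G_mem _ _ _ _) (P.G_mem _ _ _ _)) hdd)
  -- Step 3 : D u = u
  have convCz : P.ConvTo (fun n => C (x (3*n+2))) u := by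
    rw [show (fun n => C (x (3*n+2))) = fun n => y (3*n+2) from funext (fun n => (y2 n).symm)]
    exact conv32
  have convDz : P.ConvTo (fun n => D (x (3*n+2))) u := by
    rw [show (fun n => D (x (3*n+2))) = fun n => y (3*n+1) from funext hDy]
    exact conv31
  have convDDz : P.ConvTo (fun n => D (D (x (3*n+2)))) (D u) := pgm_cont_apply P hD convDz
  have hclCD := hCD (fun n => x (3*n+2)) u convCz convDz convDz
  have hclCD12 : ∀ t > (0:ℝ), Filter.Tendsto
      (fun n => P.G (C (D (x (3*n+2)))) (D (D (x (3*n+2)))) (D (D (x (3*n+2)))) t)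
      Filter.atTop (nhds 1) :=
    fun t ht => hclCD _ _ (Set.mem_insert _ _)
      (Set.mem_insert_of_mem _ (Set.mem_insert _ _)) t ht
  have hclCD21 : ∀ t > (0:ℝ), Filter.Tendsto
      (fun n => P.G (D (D (x (3*n+2)))) (C (D (x (3*n+2)))) (C (D (x (3*n+2)))) t)
      Filter.atTop (nhds 1) :=
    fun t ht => hclCD _ _ (Set.mem_insert_of_mem _ (Set.mem_insert _ _))
      (Set.mem_insert _ _) t ht
  have convCDz : P.ConvTo (fun n => C (D (x (3*n+2)))) (D u) :=
    pgm_conv_of_close P hstar hclCD12 hclCD21 convDDz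
  have g5Du : ∀ (s s' : ℝ), 0 < s' → s' < s → P.G (D u) u u s' ≤ P.G u (D u) (D u) s := by
    intro s s' h0 h1
    rw [pgm_cyc P u (D u) (D u) s, P.G_swap (D u) u (D u) s]
    exact pgm_hpp P hstar conv hyne (D u) h0 h1
  have hDu : D u = u := by
    refine pgm_step P hstar hk0 hk2 (D u) convCDz conv33 conv31
      conv32 conv3 convDDz
      conv32 conv33 convDDz
      conv33 conv31 convCDz
      conv3 conv31 convCDz
      conv32 convCDz convDDz
      (glast (D u)) (glast (D u)) (glast (D u)) (glast (D u)) g5Du ?_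
    intro n t ht
    have hdd := hd (x (3*n+3)) (x (3*n+1)) (D (x (3*n+2))) t ht
    rw [yA3 n, ← y1 n, hSy n, hTy n] at hdd
    rw [pgm_cyc P (y (3*n+3)) (y (3*n+1)) (C (D (x (3*n+2)))) (k*t)] at hdd
    exact le_trans (min_le_min_left _ (min_le_min_left _ (min_le_min_left _
      (min_le_min_left _ (P.G_mono _ _ _ (by linarith : t ≤ 2*t))))))
      (le_trans (pgm_min5_le_star P hstar _ _ _ _ _ (P.G_mem _ _ _ _) (P.G_mem _ _ _ _)
        (P.G_mem _ _ _ _) (P.G_mem _ _ _ _) (P.G_mem _ _ _ _)) hdd)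
  -- Step 4a : A u = u
  have convAu : P.ConvTo (fun _ : ℕ => A u) (A u) := pgm_conv_const P (A u)
  have hAu : A u = u := by
    refine pgm_step P hstar hk0 hk2 (A u) convAu conv31 conv32
      convu conv3 conv31
      convu convAu conv31
      convAu conv31 conv32
      conv3 conv31 conv32
      convu conv32 conv31
      (gone (A u)) (gmid (A u)) (gfst (A u)) (gone (A u)) (gone (A u)) ?_
    intro n t ht
    have hdd := hd u (x (3*n+1)) (x (3*n+2)) t ht
    rw [← y1 n, ← y2 n, hTy n, hDy n, hSu] at hdd
    exact le_trans (min_le_min_left _ (min_le_min_left _ (min_le_min_left _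
      (min_le_min_left _ (P.G_mono _ _ _ (by linarith : t ≤ 2*t))))))
      (le_trans (pgm_min5_le_star P hstar _ _ _ _ _ (P.G_mem _ _ _ _) (P.G_mem _ _ _ _)
        (P.G_mem _ _ _ _) (P.G_mem _ _ _ _) (P.G_mem _ _ _ _)) hdd)
  -- Step 4b : B u = u
  have convBu : P.ConvTo (fun _ : ℕ => B u) (B u) := pgm_conv_const P (B u)
  have hBu : B u = u := by
    refine pgm_step P hstar hk0 hk2 (B u) convBu conv33 conv32
      conv32 convu conv31
      conv32 conv33 conv31
      conv33 convBu conv32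
      convu convBu conv32
      conv32 conv32 conv31
      (gone (B u)) (gone (B u)) (gmid (B u)) (gmid (B u)) (gone (B u)) ?_
    intro n t ht
    have hdd := hd (x (3*n+3)) u (x (3*n+2)) t ht
    rw [yA3 n, ← y2 n, hSy n, hDy n, hTu] at hdd
    rw [P.G_rot (y (3*n+3)) (B u) (y (3*n+2)) (k*t)] at hdd
    exact le_trans (min_le_min_left _ (min_le_min_left _ (min_le_min_left _
      (min_le_min_left _ (P.G_mono _ _ _ (by linarith : t ≤ 2*t))))))
      (le_trans (pgm_min5_le_star P hstar _ _ _ _ _ (P.G_mem _ _ _ _) (P.G_mem _ _ _ _)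
        (P.G_mem _ _ _ _) (P.G_mem _ _ _ _) (P.G_mem _ _ _ _)) hdd)
  -- Step 4c : C u = u
  have convCu : P.ConvTo (fun _ : ℕ => C u) (C u) := pgm_conv_const P (C u)
  have hCu : C u = u := by
    refine pgm_step P hstar hk0 hk2 (C u) convCu conv33 conv31
      conv32 conv3 convu
      conv32 conv33 convu
      conv33 conv31 convCu
      conv3 conv31 convCu
      conv32 convCu convu
      (gone (C u)) (gone (C u)) (glast (C u)) (glast (C u)) (gmid (C u)) ?_
    intro n t ht
    have hdd := hd (x (3*n+3)) (x (3*n+1)) u t ht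
    rw [yA3 n, ← y1 n, hSy n, hTy n, hDu] at hdd
    rw [pgm_cyc P (y (3*n+3)) (y (3*n+1)) (C u) (k*t)] at hdd
    exact le_trans (min_le_min_left _ (min_le_min_left _ (min_le_min_left _
      (min_le_min_left _ (P.G_mono _ _ _ (by linarith : t ≤ 2*t))))))
      (le_trans (pgm_min5_le_star P hstar _ _ _ _ _ (P.G_mem _ _ _ _) (P.G_mem _ _ _ _)
        (P.G_mem _ _ _ _) (P.G_mem _ _ _ _) (P.G_mem _ _ _ _)) hdd)
  -- assemble
  refine ⟨u, ⟨hAu, hBu, hCu, hDu, hSu, hTu⟩, ?_⟩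
  intro v hv
  obtain ⟨hAv, hBv, hCv, hDv, hSv, hTv⟩ := hv
  have convv : P.ConvTo (fun _ : ℕ => v) v := pgm_conv_const P v
  refine pgm_step P hstar hk0 hk2 v convv convu convu
    convv convu convu
    convv convv convu
    convv convu convu
    convu convu convu
    convv convu convu
    (gfst v) (ghpp v) (gfst v) (gone v) (gfst v) ?_
  intro n t ht
  have hdd := hd v u u t ht
  rw [hAv, hBu, hCu, hSv, hTu, hDu] at hdd
  exact le_trans (min_le_min_left _ (min_le_min_left _ (min_le_min_left _
    (min_le_min_left _ (P.G_mono _ _ _ (by linarith : t ≤ 2*t))))))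
    (le_trans (pgm_min5_le_star P hstar _ _ _ _ _ (P.G_mem _ _ _ _) (P.G_mem _ _ _ _)
      (P.G_mem _ _ _ _) (P.G_mem _ _ _ _) (P.G_mem _ _ _ _)) hdd)
end
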